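/- arXiv:2207.00420 — 4 statements merged into one kernel-verified Lean document; each statement's English description precedes it below -/
import Mathlib

section
/- Let μ be a Borel probability measure on ℝ and s>0. If sup_{|a|≤s} D(μ ‖ T_a μ) < ∞ (equivalently, if μ ≪ T_a μ for every a with |a|≤s), then μ is absolutely continuous with respect to Lebesgue measure on ℝ. -/
open MeasureTheory Filter Real Set
open scoped ENNReal NNReal Classical

noncomputable section

/-- Shift operator on Borel measures: `(shiftMeasure a μ) B = μ (B - a)`. -/
def shiftMeasure (a : ℝ) (μ : Measure ℝ) : Measure ℝ := μ.map (· + a)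

/-- Kullback–Leibler divergence between Borel measures on `ℝ`. -/
def KLdiv (μ ν : Measure ℝ) : ℝ≥0∞ :=
  if μ ≪ ν ∧ Integrable (llr μ ν) μ then ENNReal.ofReal (∫ x, llr μ ν x ∂μ) else ⊤

/-- Standing assumptions on the cost function. -/
structure IsCostFun (c : ℝ → ℝ) (α β : ℝ) : Prop where
  nonneg : ∀ x, 0 ≤ c x
  zero : c 0 = 0
  even : ∀ x, c (-x) = c x
  mono : ∀ x y : ℝ, |x| ≤ |y| → c x ≤ c y
  continuous : Continuous c
  tail : Tendsto (fun x : ℝ => c x / (β * x ^ α)) atTop (nhds 1)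

/-!
The set of shifts `a` with `μ ≪ T_a μ` contains `0` and is closed under addition, since
`μ ≪ T_a μ ≪ T_a (T_b μ) = T_{a+b} μ`; containing `[-s, s]`, it is all of `ℝ`. Now let `N` be
Lebesgue-null. By Tonelli, `∫ μ (N - a) da = ∫ λ (N - x) dμ(x) = 0`, so `μ (N - a) = T_a μ N = 0`
for some `a`, and then `μ N = 0`.
-/

section QuasiInvariant

variable {G : Type*} [MeasurableSpace G] [AddGroup G] [MeasurableAdd₂ G]
  (μ ν : Measure G) [SFinite μ] [SFinite ν] [ν.IsAddLeftInvariant]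

theorem lintegral_measure_preimage_add_right {N : Set G} (hN : MeasurableSet N) :
    ∫⁻ a, μ ((· + a) ⁻¹' N) ∂ν = ν N * μ univ := by
  have hS : MeasurableSet {p : G × G | p.1 + p.2 ∈ N} := measurable_add hN
  calc ∫⁻ a, μ ((· + a) ⁻¹' N) ∂ν
      = μ.prod ν {p : G × G | p.1 + p.2 ∈ N} := (Measure.prod_apply_symm hS).symm
    _ = ∫⁻ x, ν ((x + ·) ⁻¹' N) ∂μ := Measure.prod_apply hS
    _ = ν N * μ univ := by simp only [measure_preimage_add, lintegral_const]

theorem absolutelyContinuous_of_forall_absolutelyContinuous_map_add_right [NeZero ν]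
    (h : ∀ a, μ ≪ μ.map (· + a)) : μ ≪ ν := by
  refine Measure.AbsolutelyContinuous.mk fun N hN hνN => ?_
  have hae : ∀ᵐ a ∂ν, μ ((· + a) ⁻¹' N) = 0 := by
    have hmeas : Measurable fun a => μ ((· + a) ⁻¹' N) :=
      measurable_measure_prodMk_right (measurable_add hN)
    refine (lintegral_eq_zero_iff hmeas).mp ?_
    rw [lintegral_measure_preimage_add_right μ ν hN, hνN, zero_mul]
  obtain ⟨a, ha⟩ := hae.exists
  exact h a (by rwa [Measure.map_apply (measurable_add_const a) hN])

end QuasiInvariant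

section Shift

variable (μ : Measure ℝ)

theorem shiftMeasure_zero : shiftMeasure 0 μ = μ := by
  simp [shiftMeasure]

theorem shiftMeasure_shiftMeasure (a b : ℝ) :
    shiftMeasure a (shiftMeasure b μ) = shiftMeasure (b + a) μ := by
  simp only [shiftMeasure]
  rw [Measure.map_map (measurable_add_const a) (measurable_add_const b)]
  congr 1
  ext x
  simp [add_assoc]

variable {μ}

theorem absolutelyContinuous_shiftMeasure_add {a b : ℝ} (ha : μ ≪ shiftMeasure a μ)
    (hb : μ ≪ shiftMeasure b μ) : μ ≪ shiftMeasure (a + b) μ := by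
  have hb' : shiftMeasure a μ ≪ shiftMeasure a (shiftMeasure b μ) :=
    hb.map (measurable_add_const a)
  rw [shiftMeasure_shiftMeasure, add_comm] at hb'
  exact ha.trans hb'

theorem absolutelyContinuous_shiftMeasure_nsmul {t : ℝ} (ht : μ ≪ shiftMeasure t μ) :
    ∀ n : ℕ, μ ≪ shiftMeasure (n * t) μ
  | 0 => by simp only [Nat.cast_zero, zero_mul, shiftMeasure_zero]; rfl
  | n + 1 => by
    rw [Nat.cast_succ, add_one_mul]
    exact absolutelyContinuous_shiftMeasure_add (absolutelyContinuous_shiftMeasure_nsmul ht n) ht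

theorem absolutelyContinuous_shiftMeasure_of_forall_abs_le {s : ℝ} (hs : 0 < s)
    (hac : ∀ a : ℝ, |a| ≤ s → μ ≪ shiftMeasure a μ) (a : ℝ) : μ ≪ shiftMeasure a μ := by
  obtain ⟨n, hn⟩ := exists_nat_gt (|a| / s)
  have hn0 : (0 : ℝ) < n := (div_nonneg (abs_nonneg a) hs.le).trans_lt hn
  have hsmall : |a / n| ≤ s := by
    rw [abs_div, abs_of_pos hn0, div_le_iff₀ hn0]
    exact ((div_lt_iff₀ hs).mp hn).le.trans_eq (mul_comm _ _)
  simpa [mul_div_cancel₀ a hn0.ne'] using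
    absolutelyContinuous_shiftMeasure_nsmul (hac _ hsmall) n

end Shift

/-- Any feasible additive mechanism is absolutely continuous: if `μ ≪ T_a μ` for every
`|a| ≤ s` (equivalently, `sup_{|a|≤s} D(μ‖T_a μ) < ∞`), then `μ ≪ λ`. -/
theorem feasible_additive_is_absolutely_continuous (μ : Measure ℝ)
    (hμ : IsProbabilityMeasure μ) (s : ℝ) (hs : 0 < s)
    (hac : ∀ a : ℝ, |a| ≤ s → μ ≪ shiftMeasure a μ) :
    μ ≪ volume :=
  absolutelyContinuous_of_forall_absolutelyContinuous_map_add_right μ volume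
    (absolutelyContinuous_shiftMeasure_of_forall_abs_le hs hac)

end
end

section
/- Fix r∈(0,1) and positive integers n<N, and let p=(p_0,…,p_N)∈(0,1]^{N+1} with p_0 + Σ_{i=1}^{N−1} 2p_i + 2p_N/(1−r) = 1. Extend by p_{−i}:=p_i for 1≤i≤N and p_i:=p_N r^{|i|−N} for |i|>N, and let P be the probability measure with cactus density f_{n,r,p}. Then sup_{a∈ℝ, |a|≤1} D(P ‖ T_a P) = max_{k∈ℤ, |k|≤n} Σ_{i∈ℤ} p_i log(p_i / p_{i+k}). -/
/-!
The cactus density is a step function on the grid of mesh `1/n`. Write a shift as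
`a = -(k + θ)/n` with `k ∈ ℤ` and `θ ∈ [0, 1]`: each cell `J_{n,i}` then splits into two pieces,
of lengths `(1 - θ)/n` and `θ/n`, on which the log-likelihood ratio of `P` against `T_a P` is the
constant `log (p_i / p_{i+k})`, resp. `log (p_i / p_{i+k+1})`. Hence
`D(P ‖ T_a P) = (1 - θ) D_k + θ D_{k+1}` with `D_k = Σᵢ pᵢ log (pᵢ / p_{i+k})`; these series
converge because `p` is squeezed between two multiples of `r^|i|`, so that its log-ratios under a
fixed translation stay bounded. A convex combination is at most the larger endpoint, and `|a| ≤ 1`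
allows exactly the endpoints `|k| ≤ n`.
-/

open MeasureTheory Filter Real Set
open scoped ENNReal NNReal Classical

noncomputable section

/-- Index `i` of the interval `J_{n,i}` containing `x` (with `J_{n,0} = [-1/(2n), 1/(2n)]`,
`J_{n,i} = ((i-1/2)/n, (i+1/2)/n]` for `i > 0`, and the mirror image for `i < 0`). -/
def cactusIdx (n : ℕ) (x : ℝ) : ℤ :=
  if 0 ≤ x then ⌈(n : ℝ) * x - 1/2⌉ else ⌊(n : ℝ) * x + 1/2⌋

/-- Extension of the vector `(p_0, …, p_N)` to all integer indices:
`p_{-i} = p_i` and `p_i = p_N r^(|i|-N)` for `|i| > N`. -/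
def extSeq (N : ℕ) (r : ℝ) (p : ℕ → ℝ) (i : ℤ) : ℝ :=
  if i.natAbs ≤ N then p i.natAbs else p N * r ^ (i.natAbs - N)

/-- The cactus density `f_{n,r,p}`: equal to `n * p_{|i|}` on `J_{n,i}` for `|i| ≤ N`
and to `n * p_N * r^(|i|-N)` on `J_{n,i}` for `|i| > N`. -/
def cactusDensity (n N : ℕ) (r : ℝ) (p : ℕ → ℝ) (x : ℝ) : ℝ :=
  (n : ℝ) * extSeq N r p (cactusIdx n x)

/-- The cactus measure `P_{n,r,p}`. -/
def cactusMeasure (n N : ℕ) (r : ℝ) (p : ℕ → ℝ) : Measure ℝ :=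
  volume.withDensity fun x => ENNReal.ofReal (cactusDensity n N r p x)

/-- Normalization constant `S_{r,p} = p_0 + Σ_{i=1}^{N-1} 2 p_i + 2 p_N / (1-r)`. -/
def Snorm (N : ℕ) (r : ℝ) (p : ℕ → ℝ) : ℝ :=
  p 0 + (∑ i ∈ Finset.Icc 1 (N - 1), 2 * p i) + 2 * p N / (1 - r)

section CeilStep

variable {θ : ℝ}

lemma integrableOn_Ioc_and_setIntegral_comp_ceil_ceil_add (hθ0 : 0 ≤ θ) (hθ1 : θ ≤ 1)
    (h : ℤ → ℤ → ℝ) (i : ℤ) :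
    IntegrableOn (fun u : ℝ => h ⌈u⌉ ⌈u + θ⌉) (Ioc ((i : ℝ) - 1) i) ∧
      ∫ u in Ioc ((i : ℝ) - 1) i, h ⌈u⌉ ⌈u + θ⌉ = (1 - θ) * h i i + θ * h i (i + 1) := by
  have hlow : EqOn (fun u : ℝ => h ⌈u⌉ ⌈u + θ⌉) (fun _ => h i i) (Ioc (i - 1) (i - θ)) := by
    rintro u ⟨hu1, hu2⟩
    simp only [Int.ceil_eq_iff.2 (⟨hu1, by linarith⟩ : (i : ℝ) - 1 < u ∧ u ≤ i),
      Int.ceil_eq_iff.2 (⟨by linarith, by linarith⟩ : (i : ℝ) - 1 < u + θ ∧ u + θ ≤ i)]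
  have hhigh : EqOn (fun u : ℝ => h ⌈u⌉ ⌈u + θ⌉) (fun _ => h i (i + 1)) (Ioc (i - θ) i) := by
    rintro u ⟨hu1, hu2⟩
    have hceil : ⌈u + θ⌉ = i + 1 :=
      Int.ceil_eq_iff.2 ⟨by push_cast; linarith, by push_cast; linarith⟩
    simp only [Int.ceil_eq_iff.2 (⟨by linarith, hu2⟩ : (i : ℝ) - 1 < u ∧ u ≤ i), hceil]
  have hsplit : Ioc ((i : ℝ) - 1) i = Ioc ((i : ℝ) - 1) (i - θ) ∪ Ioc ((i : ℝ) - θ) i :=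
    (Ioc_union_Ioc_eq_Ioc (by linarith) (by linarith)).symm
  have hint_low := (integrableOn_const (μ := volume) (C := h i i) (by simp)).congr_fun
    hlow.symm measurableSet_Ioc
  have hint_high := (integrableOn_const (μ := volume) (C := h i (i + 1)) (by simp)).congr_fun
    hhigh.symm measurableSet_Ioc
  refine ⟨hsplit ▸ hint_low.union hint_high, ?_⟩
  rw [hsplit, setIntegral_union (Ioc_disjoint_Ioc_of_le le_rfl) measurableSet_Ioc hint_low
      hint_high, setIntegral_congr_fun measurableSet_Ioc hlow,
    setIntegral_congr_fun measurableSet_Ioc hhigh, setIntegral_const, setIntegral_const]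
  simp only [measureReal_def, Real.volume_Ioc, smul_eq_mul]
  rw [ENNReal.toReal_ofReal (by linarith), ENNReal.toReal_ofReal (by linarith)]
  ring

lemma integrable_and_integral_comp_ceil_ceil_add (hθ0 : 0 ≤ θ) (hθ1 : θ ≤ 1)
    {h : ℤ → ℤ → ℝ} (hdiag : Summable fun i => h i i) (hsucc : Summable fun i => h i (i + 1)) :
    Integrable (fun u : ℝ => h ⌈u⌉ ⌈u + θ⌉) ∧
      ∫ u, h ⌈u⌉ ⌈u + θ⌉ = ∑' i, ((1 - θ) * h i i + θ * h i (i + 1)) := by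
  have hcover : ⋃ i : ℤ, Ioc ((i : ℝ) - 1) i = univ := by
    simp only [← Int.preimage_ceil_singleton, ← preimage_iUnion, iUnion_of_singleton,
      preimage_univ]
  have hdisj : Pairwise (Function.onFun Disjoint fun i : ℤ => Ioc ((i : ℝ) - 1) i) := by
    simpa only [← Int.preimage_ceil_singleton] using pairwise_disjoint_fiber (Int.ceil : ℝ → ℤ)
  have hpiece := integrableOn_Ioc_and_setIntegral_comp_ceil_ceil_add hθ0 hθ1 h
  have hnorm_piece := integrableOn_Ioc_and_setIntegral_comp_ceil_ceil_add hθ0 hθ1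
    (fun a b => ‖h a b‖)
  have hint : Integrable (fun u : ℝ => h ⌈u⌉ ⌈u + θ⌉) := by
    rw [← integrableOn_univ, ← hcover]
    refine integrableOn_iUnion_of_summable_integral_norm (fun i => (hpiece i).1) ?_
    simp only [fun i => (hnorm_piece i).2]
    exact (hdiag.norm.mul_left _).add (hsucc.norm.mul_left _)
  refine ⟨hint, ?_⟩
  have hsum := hasSum_integral_iUnion (fun i => measurableSet_Ioc) hdisj
    (by rw [hcover]; exact hint.integrableOn)
  rw [hcover, setIntegral_univ] at hsum
  simp only [fun i => (hpiece i).2] at hsum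
  exact hsum.tsum_eq.symm

end CeilStep

lemma rnDeriv_withDensity_withDensity {α : Type*} [MeasurableSpace α] {μ : Measure α}
    [SigmaFinite μ] {F G : α → ℝ≥0∞} (hF : Measurable F) (hG : Measurable G)
    (hF_top : ∀ x, F x ≠ ∞) (hG_zero : ∀ x, G x ≠ 0) (hG_top : ∀ x, G x ≠ ∞) :
    (μ.withDensity F).rnDeriv (μ.withDensity G) =ᵐ[μ] fun x => F x * (G x)⁻¹ := by
  have : SigmaFinite (μ.withDensity G) := .withDensity_of_ne_top (ae_of_all _ hG_top)
  have hμG : μ ≪ μ.withDensity G := withDensity_absolutelyContinuous' (μ := μ) hG.aemeasurable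
    (ae_of_all _ hG_zero)
  filter_upwards [hμG.ae_le (Measure.rnDeriv_withDensity_left (μ := μ) (ν := μ.withDensity G)
      hF.aemeasurable (ae_of_all _ hF_top)),
    Measure.rnDeriv_withDensity_right μ μ hG.aemeasurable (ae_of_all _ hG_zero)
      (ae_of_all _ hG_top),
    Measure.rnDeriv_self μ] with x hleft hright hself
  rw [hleft, hright, hself, mul_one]

lemma llr_withDensity_ofReal {α : Type*} [MeasurableSpace α] {μ : Measure α} [SigmaFinite μ]
    {f g : α → ℝ} (hf : Measurable f) (hg : Measurable g) (hf_pos : ∀ x, 0 < f x)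
    (hg_pos : ∀ x, 0 < g x) :
    llr (μ.withDensity fun x => ENNReal.ofReal (f x)) (μ.withDensity fun x => ENNReal.ofReal (g x))
      =ᵐ[μ] fun x => log (f x / g x) := by
  filter_upwards [rnDeriv_withDensity_withDensity hf.ennreal_ofReal hg.ennreal_ofReal
    (fun _ => ENNReal.ofReal_ne_top) (fun x => by simp [hg_pos x])
    (fun _ => ENNReal.ofReal_ne_top)] with x hx
  simp only [llr_def, hx]
  rw [ENNReal.toReal_mul, ENNReal.toReal_inv, ENNReal.toReal_ofReal (hf_pos x).le,
    ENNReal.toReal_ofReal (hg_pos x).le, div_eq_mul_inv]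

lemma KLdiv_withDensity_ofReal {μ : Measure ℝ} [SigmaFinite μ] {f g : ℝ → ℝ} (hf : Measurable f)
    (hg : Measurable g) (hf_pos : ∀ x, 0 < f x) (hg_pos : ∀ x, 0 < g x)
    (hint : Integrable (fun x => f x * log (f x / g x)) μ) :
    KLdiv (μ.withDensity fun x => ENNReal.ofReal (f x))
        (μ.withDensity fun x => ENNReal.ofReal (g x)) =
      ENNReal.ofReal (∫ x, f x * log (f x / g x) ∂μ) := by
  set P := μ.withDensity fun x => ENNReal.ofReal (f x)
  set Q := μ.withDensity fun x => ENNReal.ofReal (g x)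
  have hllr : llr P Q =ᵐ[P] fun x => log (f x / g x) :=
    (withDensity_absolutelyContinuous μ _).ae_le (llr_withDensity_ofReal hf hg hf_pos hg_pos)
  have hfin : ∀ᵐ x ∂μ, ENNReal.ofReal (f x) < ∞ := ae_of_all _ fun _ => ENNReal.ofReal_lt_top
  have hac : P ≪ Q := (withDensity_absolutelyContinuous μ _).trans
    (withDensity_absolutelyContinuous' hg.ennreal_ofReal.aemeasurable
      (ae_of_all _ fun x => by simp [hg_pos x]))
  have hint_llr : Integrable (llr P Q) P := by
    refine Integrable.congr ?_ hllr.symm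
    rw [integrable_withDensity_iff hf.ennreal_ofReal hfin]
    simpa only [ENNReal.toReal_ofReal (hf_pos _).le, mul_comm] using hint
  rw [KLdiv, if_pos ⟨hac, hint_llr⟩, integral_congr_ae hllr,
    integral_withDensity_eq_integral_toReal_smul hf.ennreal_ofReal hfin]
  simp only [ENNReal.toReal_ofReal (hf_pos _).le, smul_eq_mul]

lemma shiftMeasure_withDensity {μ : Measure ℝ} [μ.IsAddRightInvariant] {F : ℝ → ℝ≥0∞}
    (hF : Measurable F) (a : ℝ) :
    shiftMeasure a (μ.withDensity F) = μ.withDensity fun x => F (x - a) := by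
  ext s hs
  have hpre : (· - a) ⁻¹' ((· + a) ⁻¹' s) = s := by ext x; simp
  rw [shiftMeasure, Measure.map_apply (measurable_add_const a) hs,
    withDensity_apply _ (measurable_add_const a hs), withDensity_apply _ hs,
    ← (measurePreserving_sub_right μ a).setLIntegral_comp_preimage
      (measurable_add_const a hs) hF, hpre]

def shiftKL (q : ℤ → ℝ) (k : ℤ) : ℝ := ∑' i, q i * log (q i / q (i + k))

lemma summable_pow_natAbs {ρ : ℝ} (hρ0 : 0 ≤ ρ) (hρ1 : ρ < 1) :
    Summable fun i : ℤ => ρ ^ i.natAbs := by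
  have h := summable_geometric_of_lt_one hρ0 hρ1
  exact .of_nat_of_neg (by simpa using h) (by simpa using h)

lemma summable_mul_log_div_add {q : ℤ → ℝ} {ρ c C : ℝ} (hρ0 : 0 < ρ) (hρ1 : ρ < 1)
    (hc : 0 < c) (hlow : ∀ i, c * ρ ^ i.natAbs ≤ q i) (hup : ∀ i, q i ≤ C * ρ ^ i.natAbs)
    (k : ℤ) : Summable fun i => q i * log (q i / q (i + k)) := by
  have hq : ∀ i, 0 < q i := fun i => (by positivity : 0 < c * ρ ^ i.natAbs).trans_le (hlow i)
  set R := C / (c * ρ ^ k.natAbs)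
  have hC : 0 ≤ C := nonneg_of_mul_nonneg_left ((hq 0).le.trans (hup 0)) (by positivity)
  have hratio : ∀ i j, j.natAbs ≤ i.natAbs + k.natAbs → q i / q j ≤ R := by
    intro i j hij
    rw [div_le_div_iff₀ (hq j) (by positivity)]
    calc q i * (c * ρ ^ k.natAbs) ≤ C * ρ ^ i.natAbs * (c * ρ ^ k.natAbs) := by
          gcongr; exact hup i
      _ = C * c * ρ ^ (i.natAbs + k.natAbs) := by ring
      _ ≤ C * c * ρ ^ j.natAbs := by
          exact mul_le_mul_of_nonneg_left (pow_le_pow_of_le_one hρ0.le hρ1.le hij) (by positivity)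
      _ ≤ C * q j := by
          rw [mul_assoc]; gcongr; exact hlow j
  have hlog : ∀ i, |log (q i / q (i + k))| ≤ log R := by
    intro i
    have hle := log_le_log (div_pos (hq _) (hq _)) (hratio i (i + k) (Int.natAbs_add_le i k))
    have hge := log_le_log (div_pos (hq _) (hq _))
      (hratio (i + k) i (by simpa using Int.natAbs_sub_le (i + k) k))
    rw [← inv_div, log_inv] at hge
    exact abs_le.2 ⟨by linarith, hle⟩
  refine .of_norm_bounded ((summable_pow_natAbs hρ0.le hρ1).mul_left (C * log R)) fun i => ?_
  rw [norm_mul, Real.norm_of_nonneg (hq i).le, Real.norm_eq_abs, mul_right_comm]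
  exact mul_le_mul (hup i) (hlog i) (abs_nonneg _) ((hq i).le.trans (hup i))

section Cactus

variable {n N : ℕ} {r : ℝ} {p : ℕ → ℝ}

lemma extSeq_pos (hr : 0 < r) (hp : ∀ i ≤ N, 0 < p i) (i : ℤ) : 0 < extSeq N r p i := by
  unfold extSeq
  split_ifs with hi
  exacts [hp _ hi, mul_pos (hp N le_rfl) (pow_pos hr _)]

lemma extSeq_le_pow (hr0 : 0 < r) (hr1 : r ≤ 1) (hp : ∀ i ≤ N, p i ≤ 1) (i : ℤ) :
    extSeq N r p i ≤ (r ^ N)⁻¹ * r ^ i.natAbs := by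
  unfold extSeq
  split_ifs with hi
  · calc p i.natAbs ≤ 1 := hp _ hi
      _ ≤ (r ^ N)⁻¹ * r ^ i.natAbs := by
        rw [inv_mul_eq_div, one_le_div (by positivity)]
        exact pow_le_pow_of_le_one hr0.le hr1 hi
  · rw [pow_sub₀ _ hr0.ne' (not_le.1 hi).le, mul_comm (r ^ _)]
    exact mul_le_of_le_one_left (by positivity) (hp N le_rfl)

lemma exists_pos_mul_pow_le_extSeq (hr0 : 0 < r) (hr1 : r ≤ 1) (hp : ∀ i ≤ N, 0 < p i) :
    ∃ c > 0, ∀ i : ℤ, c * r ^ i.natAbs ≤ extSeq N r p i := by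
  obtain ⟨j, hj, hmin⟩ := (Finset.Iic N).exists_min_image p ⟨0, Finset.mem_Iic.2 N.zero_le⟩
  have hj_pos : 0 < p j := hp j (Finset.mem_Iic.1 hj)
  have hmin' : ∀ i ≤ N, p j ≤ p i := fun i hi => hmin i (Finset.mem_Iic.2 hi)
  refine ⟨p j, hj_pos, fun i => ?_⟩
  unfold extSeq
  split_ifs with hi
  · exact (mul_le_of_le_one_right hj_pos.le (pow_le_one₀ hr0.le hr1)).trans (hmin' _ hi)
  · exact mul_le_mul (hmin' N le_rfl) (pow_le_pow_of_le_one hr0.le hr1 (Nat.sub_le _ _))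
      (by positivity) (hp N le_rfl).le

lemma summable_extSeq_mul_log_div_add (hr : r ∈ Ioo 0 1) (hp : ∀ i ≤ N, p i ∈ Ioc 0 1)
    (k : ℤ) : Summable fun i => extSeq N r p i * log (extSeq N r p i / extSeq N r p (i + k)) := by
  obtain ⟨c, hc, hlow⟩ := exists_pos_mul_pow_le_extSeq hr.1 hr.2.le fun i hi => (hp i hi).1
  exact summable_mul_log_div_add hr.1 hr.2 hc hlow
    (extSeq_le_pow hr.1 hr.2.le fun i hi => (hp i hi).2) k

lemma cactusIdx_ae_eq_ceil (hn : 0 < n) : cactusIdx n =ᵐ[volume] fun x => ⌈n * x - 1 / 2⌉ := by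
  have hn' : (n : ℝ) ≠ 0 := by exact_mod_cast hn.ne'
  -- off the half-integer grid the floor and ceiling conventions of `cactusIdx` agree
  have hgrid : ((fun x : ℝ => n * x + 1 / 2) ⁻¹' range Int.cast).Countable :=
    (countable_range _).preimage ((add_left_injective _).comp (mul_right_injective₀ hn'))
  refine ae_iff.2 (measure_mono_null (fun x hx => ?_) (hgrid.measure_zero volume))
  by_contra hxZ
  refine hx ?_
  unfold cactusIdx
  split_ifs
  · rfl
  · dsimp only
    rw [show (n : ℝ) * x - 1 / 2 = n * x + 1 / 2 - 1 by ring, Int.ceil_sub_one,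
      (Int.ceil_eq_floor_add_one_iff_notMem _).2 hxZ, add_sub_cancel_right]

lemma cactusMeasure_eq_withDensity_ceil (hn : 0 < n) :
    cactusMeasure n N r p =
      volume.withDensity fun x : ℝ => ENNReal.ofReal (n * extSeq N r p ⌈(n : ℝ) * x - 1 / 2⌉) :=
  withDensity_congr_ae <| by
    filter_upwards [cactusIdx_ae_eq_ceil hn] with x hx
    rw [cactusDensity, hx]

theorem KLdiv_cactusMeasure_shiftMeasure (hn : 0 < n)
    (hr : r ∈ Ioo 0 1) (hp : ∀ i ≤ N, p i ∈ Ioc 0 1) (k : ℤ) {θ : ℝ} (hθ0 : 0 ≤ θ)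
    (hθ1 : θ ≤ 1) :
    KLdiv (cactusMeasure n N r p) (shiftMeasure (-((k + θ) / n)) (cactusMeasure n N r p)) =
      ENNReal.ofReal ((1 - θ) * shiftKL (extSeq N r p) k + θ * shiftKL (extSeq N r p) (k + 1)) := by
  set q := extSeq N r p
  have hn' : (0 : ℝ) < n := by exact_mod_cast hn
  have hq : ∀ i, 0 < q i := extSeq_pos hr.1 fun i hi => (hp i hi).1
  set f : ℝ → ℝ := fun x => n * q ⌈(n : ℝ) * x - 1 / 2⌉
  have hf : Measurable f := measurable_const.mul
    ((measurable_from_top (f := q)).comp (measurable_id.const_mul _ |>.sub_const _).ceil)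
  have hf_pos : ∀ x, 0 < f x := fun x => mul_pos hn' (hq _)
  -- in the variable `u = n x - 1/2` the translate by `(k + θ)/n` becomes `⌈u + θ⌉ + k`
  set H : ℝ → ℝ := fun u => q ⌈u⌉ * log (q ⌈u⌉ / q (⌈u + θ⌉ + k))
  have hfH : ∀ x, f x * log (f x / f (x - -((k + θ) / n))) = n * H (n * x - 1 / 2) := by
    intro x
    have : (n : ℝ) * (x - -((k + θ) / n)) - 1 / 2 = n * x - 1 / 2 + θ + k := by
      field_simp; ring
    simp only [f, H, this, Int.ceil_add_intCast, mul_div_mul_left _ _ hn'.ne']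
    ring
  have hsucc : ∀ i : ℤ, i + 1 + k = i + (k + 1) := fun i => by ring
  obtain ⟨hHint, hHval⟩ := integrable_and_integral_comp_ceil_ceil_add hθ0 hθ1
    (h := fun i j => q i * log (q i / q (j + k))) (summable_extSeq_mul_log_div_add hr hp k)
    (by simpa only [hsucc] using summable_extSeq_mul_log_div_add hr hp (k + 1))
  have hint : Integrable fun x => f x * log (f x / f (x - -((k + θ) / n))) := by
    simpa only [hfH] using ((hHint.comp_sub_right (1 / 2)).comp_mul_left' hn'.ne').const_mul (n : ℝ)
  rw [cactusMeasure_eq_withDensity_ceil hn, shiftMeasure_withDensity hf.ennreal_ofReal]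
  refine (KLdiv_withDensity_ofReal (f := f) (g := fun x => f (x - -((k + θ) / n))) hf
    (hf.comp (measurable_sub_const _)) hf_pos (fun x => hf_pos _) hint).trans ?_
  simp only [hfH]
  rw [integral_const_mul, Measure.integral_comp_mul_left (fun x => H (x - 1 / 2)),
    integral_sub_right_eq_self, hHval, abs_of_pos (inv_pos.2 hn'), smul_eq_mul,
    mul_inv_cancel_left₀ hn'.ne']
  simp only [hsucc]
  rw [Summable.tsum_add ((summable_extSeq_mul_log_div_add hr hp k).mul_left _)
    ((summable_extSeq_mul_log_div_add hr hp (k + 1)).mul_left _), tsum_mul_left, tsum_mul_left]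
  rfl

end Cactus

lemma exists_int_add_mem_Icc_of_abs_le {n : ℕ} (hn : 0 < n) {t : ℝ} (ht : |t| ≤ n) :
    ∃ k : ℤ, ∃ θ ∈ Icc (0 : ℝ) 1, t = k + θ ∧ -(n : ℤ) ≤ k ∧ k + 1 ≤ n := by
  obtain ⟨htl, htu⟩ := abs_le.1 ht
  rcases htu.lt_or_eq with hlt | rfl
  · refine ⟨⌊t⌋, Int.fract t, ⟨Int.fract_nonneg t, (Int.fract_lt_one t).le⟩,
      (Int.floor_add_fract t).symm, Int.le_floor.2 (by push_cast; linarith), ?_⟩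
    exact Int.add_one_le_of_lt (Int.floor_lt.2 (by exact_mod_cast hlt))
  · exact ⟨n - 1, 1, ⟨zero_le_one, le_rfl⟩, by push_cast; ring, by omega, by omega⟩

lemma ofReal_convex_combo_le_max {θ : ℝ} (hθ0 : 0 ≤ θ) (hθ1 : θ ≤ 1) (x y : ℝ) :
    ENNReal.ofReal ((1 - θ) * x + θ * y) ≤ max (ENNReal.ofReal x) (ENNReal.ofReal y) := by
  rw [← ENNReal.ofReal_max]
  exact ENNReal.ofReal_le_ofReal <| by
    simpa only [smul_eq_mul] using
      Convex.combo_le_max x y (sub_nonneg.2 hθ1) hθ0 (sub_add_cancel 1 θ)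

theorem cactus_sup_klDiv_eq_max_general (n N : ℕ) (hn : 0 < n)
    (r : ℝ) (hr : r ∈ Set.Ioo (0 : ℝ) 1) (p : ℕ → ℝ)
    (hp : ∀ i ≤ N, p i ∈ Set.Ioc (0 : ℝ) 1) :
    (⨆ (a : ℝ) (_ : |a| ≤ 1),
        KLdiv (cactusMeasure n N r p) (shiftMeasure a (cactusMeasure n N r p))) =
      ⨆ (k : ℤ) (_ : |k| ≤ (n : ℤ)),
        ENNReal.ofReal
          (∑' i : ℤ, extSeq N r p i * Real.log (extSeq N r p i / extSeq N r p (i + k))) := by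
  have hn' : (0 : ℝ) < n := by exact_mod_cast hn
  change _ = ⨆ (k : ℤ) (_ : |k| ≤ (n : ℤ)), ENNReal.ofReal (shiftKL (extSeq N r p) k)
  refine le_antisymm (iSup₂_le fun a ha => ?_) (iSup₂_le fun k hk => ?_)
  · obtain ⟨k, θ, ⟨hθ0, hθ1⟩, hkθ, hk0, hk1⟩ := exists_int_add_mem_Icc_of_abs_le hn
      (t := -(n * a)) (by rw [abs_neg, abs_mul, Nat.abs_cast]; nlinarith [abs_nonneg a])
    have ha : a = -((k + θ) / n) := by rw [← hkθ]; field_simp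
    rw [ha, KLdiv_cactusMeasure_shiftMeasure hn hr hp k hθ0 hθ1]
    refine (ofReal_convex_combo_le_max hθ0 hθ1 _ _).trans (max_le ?_ ?_)
    · exact le_iSup₂_of_le k (abs_le.2 ⟨hk0, by omega⟩) le_rfl
    · exact le_iSup₂_of_le (k + 1) (abs_le.2 ⟨by omega, hk1⟩) le_rfl
  · have hkl := KLdiv_cactusMeasure_shiftMeasure hn hr hp k le_rfl zero_le_one
    rw [add_zero, sub_zero, one_mul, zero_mul, add_zero] at hkl
    refine le_iSup₂_of_le _ ?_ hkl.ge
    rw [abs_neg, abs_div, Nat.abs_cast, div_le_one hn']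
    exact_mod_cast abs_le.2 (abs_le.1 hk)

/-- The maximal KL-divergence of a cactus mechanism over shifts `|a| ≤ 1` equals the maximum
over integer shifts `|k| ≤ n` of `Σ_{i∈ℤ} p_i log(p_i / p_{i+k})`. -/
theorem cactus_sup_klDiv_eq_max (n N : ℕ) (hn : 0 < n) (hnN : n < N)
    (r : ℝ) (hr : r ∈ Set.Ioo (0 : ℝ) 1) (p : ℕ → ℝ)
    (hp : ∀ i ≤ N, p i ∈ Set.Ioc (0 : ℝ) 1)
    (hnorm : Snorm N r p = 1) :
    (⨆ (a : ℝ) (_ : |a| ≤ 1),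
        KLdiv (cactusMeasure n N r p) (shiftMeasure a (cactusMeasure n N r p))) =
      ⨆ (k : ℤ) (_ : |k| ≤ (n : ℤ)),
        ENNReal.ofReal
          (∑' i : ℤ, extSeq N r p i * Real.log (extSeq N r p i / extSeq N r p (i + k))) :=
  cactus_sup_klDiv_eq_max_general n N hn r hr p hp

end
end

section
/- Let γ∈(0,1], ψ(x) = exp(−|x|^γ)/χ with χ = ∫_ℝ exp(−|x|^γ)dx, ψ^σ(x) = ψ(x/σ)/σ for σ>0, and q_σ := q ∗ ψ^σ. For any probability density q on ℝ and any σ>0, there exists a constant τ>0 such that, as w→∞: (i) ∫_{[w,∞)} q_σ(x) dx ≥ exp(−τ·w^γ) for all sufficiently large w, and (ii) min_{|x|≤w} q_σ(x) ≥ exp(−τ·w^γ) for all sufficiently large w. Equivalently, both quantities are exp(−O(w^γ)) as w→∞. -/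
open MeasureTheory Filter Real Set
open scoped ENNReal NNReal Classical

noncomputable section

/-- Normalization constant `χ = ∫ exp(-|x|^γ) dx`. -/
def chiC (γ : ℝ) : ℝ := ∫ x : ℝ, Real.exp (-|x| ^ γ)

/-- The density `ψ(x) = exp(-|x|^γ) / χ`. -/
def psi (γ : ℝ) (x : ℝ) : ℝ := Real.exp (-|x| ^ γ) / chiC γ

/-- The dilated density `ψ^σ(x) = ψ(x/σ)/σ`. -/
def psiS (γ σ : ℝ) (x : ℝ) : ℝ := psi γ (x / σ) / σ

/-- The smoothed density `q_σ = q ∗ ψ^σ`. -/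
def smoothed (γ σ : ℝ) (q : ℝ → ℝ) (x : ℝ) : ℝ := ∫ y, q y * psiS γ σ (x - y)

/-!
Convolving with `ψ^σ` spreads mass everywhere at the rate of `ψ^σ`: if `q` puts mass `m > 0` on
`[-M, M]`, then `q_σ(x) ≥ m ψ^σ(R + M)` whenever `|x| ≤ R`, because `ψ^σ` is radially decreasing.
For `γ ≤ 1` the map `t ↦ t^γ` is subadditive, so `ψ^σ(w + a) ≥ c exp(-(w/σ)^γ)` with `c > 0`,
which beats `exp(-τ w^γ)` for any `τ > σ^{-γ}` once `w` is large.
-/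

lemma chiC_eq_two_mul_Gamma {γ : ℝ} (hγ : 0 < γ) : chiC γ = 2 * Gamma (1 / γ + 1) := by
  rw [chiC, integral_comp_abs (f := fun x => exp (-x ^ γ)), integral_exp_neg_rpow hγ]

lemma chiC_pos {γ : ℝ} (hγ : 0 < γ) : 0 < chiC γ := by
  rw [chiC_eq_two_mul_Gamma hγ]
  have := Gamma_pos_of_pos (by positivity : 0 < 1 / γ + 1)
  positivity

lemma chiC_nonneg (γ : ℝ) : 0 ≤ chiC γ :=
  integral_nonneg fun _ => (exp_pos _).le

lemma continuous_psiS {γ : ℝ} (hγ : 0 ≤ γ) (σ : ℝ) : Continuous (psiS γ σ) := by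
  unfold psiS psi
  fun_prop (disch := exact fun _ => Or.inr hγ)

lemma psiS_nonneg (γ : ℝ) {σ : ℝ} (hσ : 0 ≤ σ) (z : ℝ) : 0 ≤ psiS γ σ z := by
  have := chiC_nonneg γ
  unfold psiS psi
  positivity

lemma psiS_le_psiS {γ σ z z' : ℝ} (hγ : 0 ≤ γ) (hσ : 0 ≤ σ) (h : |z| ≤ |z'|) :
    psiS γ σ z' ≤ psiS γ σ z := by
  have hzσ : |z / σ| ≤ |z' / σ| := by
    rw [abs_div, abs_div]
    gcongr
  unfold psiS psi
  have := chiC_nonneg γ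
  gcongr

lemma integrable_mul_psiS {γ σ : ℝ} (hγ : 0 ≤ γ) (hσ : 0 ≤ σ) {q : ℝ → ℝ} (hq : Integrable q)
    (x : ℝ) : Integrable fun y => q y * psiS γ σ (x - y) := by
  refine hq.mul_bdd (c := psiS γ σ 0)
    ((continuous_psiS hγ σ).comp (continuous_sub_left x)).aestronglyMeasurable
    (ae_of_all _ fun y => ?_)
  rw [norm_of_nonneg (psiS_nonneg γ hσ _)]
  exact psiS_le_psiS hγ hσ (by simp)

lemma mul_setIntegral_le_integral_mul {α : Type*} [MeasurableSpace α] {μ : Measure α}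
    {f g : α → ℝ} {s : Set α} {c : ℝ} (hs : MeasurableSet s) (hf : Integrable f μ) (hf0 : 0 ≤ f)
    (hg0 : 0 ≤ g) (hfg : Integrable (fun y => f y * g y) μ) (hc : ∀ y ∈ s, c ≤ g y) :
    c * ∫ y in s, f y ∂μ ≤ ∫ y, f y * g y ∂μ :=
  calc c * ∫ y in s, f y ∂μ = ∫ y in s, f y * c ∂μ := by
        rw [← integral_const_mul]; simp only [mul_comm]
    _ ≤ ∫ y in s, f y * g y ∂μ :=
        setIntegral_mono_on (hf.mul_const c).integrableOn hfg.integrableOn hs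
          fun y hy => mul_le_mul_of_nonneg_left (hc y hy) (hf0 y)
    _ ≤ ∫ y, f y * g y ∂μ :=
        setIntegral_le_integral hfg (ae_of_all _ fun y => mul_nonneg (hf0 y) (hg0 y))

lemma exists_lt_setIntegral_Ioc {f : ℝ → ℝ} (hf : Integrable f) {a : ℝ} (ha : a < ∫ x, f x) :
    ∃ M, 0 ≤ M ∧ a < ∫ x in Ioc (-M) M, f x := by
  have hlim := intervalIntegral_tendsto_integral hf tendsto_neg_atTop_atBot tendsto_id
  obtain ⟨M, hM, hM0⟩ := ((hlim.eventually (lt_mem_nhds ha)).and (eventually_ge_atTop 0)).exists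
  refine ⟨M, hM0, ?_⟩
  rwa [id, intervalIntegral.integral_of_le (by linarith)] at hM

lemma setIntegral_mul_psiS_le_smoothed {γ σ : ℝ} (hγ : 0 ≤ γ) (hσ : 0 ≤ σ) {q : ℝ → ℝ}
    (hq : Integrable q) (hq0 : 0 ≤ q) {M R x : ℝ} (hx : |x| ≤ R) :
    (∫ y in Ioc (-M) M, q y) * psiS γ σ (R + M) ≤ smoothed γ σ q x := by
  rw [mul_comm]
  refine mul_setIntegral_le_integral_mul (g := fun y => psiS γ σ (x - y)) measurableSet_Ioc hq hq0
    (fun y => psiS_nonneg γ hσ _) (integrable_mul_psiS hγ hσ hq x) fun y hy => psiS_le_psiS hγ hσ ?_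
  calc |x - y| ≤ |x| + |y| := abs_sub _ _
    _ ≤ R + M := add_le_add hx (abs_le.2 ⟨hy.1.le, hy.2⟩)
    _ ≤ |R + M| := le_abs_self _

lemma exists_exp_neg_mul_rpow_le_mul_psiS {γ σ : ℝ} (hγ0 : 0 < γ) (hγ1 : γ ≤ 1) (hσ : 0 < σ)
    {a c : ℝ} (ha : 0 ≤ a) (hc : 0 < c) :
    ∃ τ > 0, ∀ᶠ w in atTop, exp (-τ * w ^ γ) ≤ c * psiS γ σ (w + a) := by
  have hχ := chiC_pos hγ0
  set b := (σ ^ γ)⁻¹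
  set K := c * exp (-(a / σ) ^ γ) / (chiC γ * σ)
  have hK : 0 < K := by positivity
  refine ⟨b + 1, by positivity, ?_⟩
  have hdecay : ∀ᶠ w in atTop, exp (-w ^ γ) ≤ K :=
    (tendsto_exp_atBot.comp (tendsto_neg_atTop_atBot.comp (tendsto_rpow_atTop hγ0))).eventually
      (eventually_le_nhds hK)
  filter_upwards [hdecay, eventually_ge_atTop 0] with w hw hw0
  have hsub : ((w + a) / σ) ^ γ ≤ b * w ^ γ + (a / σ) ^ γ :=
    calc ((w + a) / σ) ^ γ ≤ (w / σ) ^ γ + (a / σ) ^ γ := by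
          rw [add_div]
          exact rpow_add_le_add_rpow (by positivity) (by positivity) hγ0.le hγ1
      _ = b * w ^ γ + (a / σ) ^ γ := by rw [div_rpow hw0 hσ.le]; ring
  calc exp (-(b + 1) * w ^ γ) = exp (-(b * w ^ γ)) * exp (-w ^ γ) := by
        rw [← exp_add]; ring_nf
    _ ≤ exp (-(b * w ^ γ)) * K := by gcongr
    _ = c * (exp (-(b * w ^ γ + (a / σ) ^ γ)) / (chiC γ * σ)) := by
        simp only [K, neg_add, exp_add]; ring
    _ ≤ c * (exp (-((w + a) / σ) ^ γ) / (chiC γ * σ)) := by gcongr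
    _ = c * psiS γ σ (w + a) := by
        rw [psiS, psi, abs_of_nonneg (by positivity), div_div]

lemma ofReal_le_setLIntegral_Ici {f : ℝ → ℝ} {a w : ℝ} (h : ∀ x ∈ Icc w (w + 1), a ≤ f x) :
    ENNReal.ofReal a ≤ ∫⁻ x in Ici w, ENNReal.ofReal (f x) :=
  calc ENNReal.ofReal a = ∫⁻ _ in Icc w (w + 1), ENNReal.ofReal a := by simp [Real.volume_Icc]
    _ ≤ ∫⁻ x in Icc w (w + 1), ENNReal.ofReal (f x) :=
        setLIntegral_mono' measurableSet_Icc fun x hx => ENNReal.ofReal_le_ofReal (h x hx)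
    _ ≤ ∫⁻ x in Ici w, ENNReal.ofReal (f x) := lintegral_mono_set Icc_subset_Ici_self

theorem smoothed_density_lower_bounds_general (γ : ℝ) (hγ : γ ∈ Set.Ioc (0 : ℝ) 1)
    (q : ℝ → ℝ) (hq0 : ∀ x, 0 ≤ q x) (hq1 : ∫ x, q x = 1)
    (σ : ℝ) (hσ : 0 < σ) :
    ∃ τ > (0 : ℝ), ∀ᶠ w : ℝ in atTop,
      (ENNReal.ofReal (Real.exp (-τ * w ^ γ)) ≤ ∫⁻ x in Set.Ici w, ENNReal.ofReal (smoothed γ σ q x)) ∧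
      (∀ x ∈ Set.Icc (-w) w, Real.exp (-τ * w ^ γ) ≤ smoothed γ σ q x) := by
  obtain ⟨hγ0, hγ1⟩ := hγ
  have hq := integrable_of_integral_eq_one hq1
  obtain ⟨M, hM0, hmass⟩ := exists_lt_setIntegral_Ioc hq (hq1 ▸ zero_lt_one)
  obtain ⟨τ, hτ, htail⟩ :=
    exists_exp_neg_mul_rpow_le_mul_psiS hγ0 hγ1 hσ (a := 1 + M) (by positivity) hmass
  refine ⟨τ, hτ, ?_⟩
  filter_upwards [htail, eventually_ge_atTop 0] with w hw hw0
  have hbound : ∀ x, |x| ≤ w + 1 → exp (-τ * w ^ γ) ≤ smoothed γ σ q x := fun x hx =>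
    hw.trans (by simpa only [add_assoc] using
      setIntegral_mul_psiS_le_smoothed hγ0.le hσ.le hq hq0 hx)
  exact ⟨ofReal_le_setLIntegral_Ici fun x hx => hbound x (abs_le.2 ⟨by linarith [hx.1], hx.2⟩),
    fun x hx => hbound x (abs_le.2 ⟨by linarith [hx.1], by linarith [hx.2]⟩)⟩

/-- `exp(-O(w^γ))` lower bounds: there is `τ > 0` such that, for all large `w`,
`∫_{[w,∞)} q_σ ≥ exp(-τ w^γ)` and `min_{|x|≤w} q_σ(x) ≥ exp(-τ w^γ)`. -/
theorem smoothed_density_lower_bounds (γ : ℝ) (hγ : γ ∈ Set.Ioc (0 : ℝ) 1)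
    (q : ℝ → ℝ) (hqm : Measurable q) (hq0 : ∀ x, 0 ≤ q x) (hq1 : ∫ x, q x = 1)
    (σ : ℝ) (hσ : 0 < σ) :
    ∃ τ > (0 : ℝ), ∀ᶠ w : ℝ in atTop,
      (ENNReal.ofReal (Real.exp (-τ * w ^ γ)) ≤ ∫⁻ x in Set.Ici w, ENNReal.ofReal (smoothed γ σ q x)) ∧
      (∀ x ∈ Set.Icc (-w) w, Real.exp (-τ * w ^ γ) ≤ smoothed γ σ q x) :=
  smoothed_density_lower_bounds_general γ hγ q hq0 hq1 σ hσ

end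
end

section
/- Let c be an even nonnegative cost function and q a probability density on ℝ. Define the symmetrized density q̃(x) := (q(x)+q(−x))/2. Then ∫ c(x) q̃(x) dx = ∫ c(x) q(x) dx, and for every s>0, sup_{|a|≤s} D(q̃ ‖ T_a q̃) ≤ sup_{|a|≤s} D(q ‖ T_a q). -/
/-!
The cost is unchanged because `c` is even and Lebesgue measure is invariant under `x ↦ -x`.
For the divergence, write `q̃ = (q + Rq) / 2` with `Rq x = q (-x)`. Then
`T_a q̃ = (T_a q + R (T_{-a} q)) / 2`, so joint convexity of the divergence (the two-term log-sum
inequality, integrated) and its invariance under `R` give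
`D(q̃ ‖ T_a q̃) ≤ (D(q ‖ T_a q) + D(q ‖ T_{-a} q)) / 2`, and `|-a| = |a|`.
-/

open MeasureTheory Filter Real Set
open scoped ENNReal NNReal Classical

noncomputable section

/-- The Borel measure on `ℝ` with density `f` with respect to Lebesgue measure. -/
def mOf (f : ℝ → ℝ) : Measure ℝ := volume.withDensity fun x => ENNReal.ofReal (f x)

lemma mul_log_le_mul_log_div_add_mul_sub {p r t : ℝ} (hp : 0 ≤ p) (hr : 0 ≤ r)
    (hpr : r = 0 → p = 0) (ht : 0 < t) :
    p * log t ≤ p * log (p / r) + t * r - p := by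
  rcases hp.eq_or_lt with rfl | hp
  · simp only [zero_mul, zero_add, sub_zero]
    positivity
  have hr : 0 < r := hr.lt_of_ne fun h => hp.ne' (hpr h.symm)
  have hlog := log_le_sub_one_of_pos (div_pos ht (div_pos hp hr))
  rw [log_div ht.ne' (div_pos hp hr).ne'] at hlog
  have hmul : p * (t / (p / r) - 1) = t * r - p := by field_simp
  nlinarith [mul_le_mul_of_nonneg_left hlog hp.le]

lemma sub_le_mul_log_div {p r : ℝ} (hp : 0 ≤ p) (hr : 0 ≤ r) (hpr : r = 0 → p = 0) :
    p - r ≤ p * log (p / r) := by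
  have := mul_log_le_mul_log_div_add_mul_sub hp hr hpr one_pos
  rw [log_one] at this
  linarith

lemma add_mul_log_div_add_le {p₁ p₂ r₁ r₂ : ℝ} (hp₁ : 0 ≤ p₁) (hp₂ : 0 ≤ p₂) (hr₁ : 0 ≤ r₁)
    (hr₂ : 0 ≤ r₂) (h₁ : r₁ = 0 → p₁ = 0) (h₂ : r₂ = 0 → p₂ = 0) :
    (p₁ + p₂) * log ((p₁ + p₂) / (r₁ + r₂)) ≤ p₁ * log (p₁ / r₁) + p₂ * log (p₂ / r₂) := by
  rcases (add_nonneg hp₁ hp₂).eq_or_lt with hP | hP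
  · obtain ⟨rfl, rfl⟩ := (add_eq_zero_iff_of_nonneg hp₁ hp₂).1 hP.symm
    simp
  have hR : 0 < r₁ + r₂ := by
    refine (add_nonneg hr₁ hr₂).lt_of_ne fun hR => hP.ne' ?_
    obtain ⟨e₁, e₂⟩ := (add_eq_zero_iff_of_nonneg hr₁ hr₂).1 hR.symm
    rw [h₁ e₁, h₂ e₂, add_zero]
  have ht := div_pos hP hR
  have hsum : (p₁ + p₂) / (r₁ + r₂) * r₁ + (p₁ + p₂) / (r₁ + r₂) * r₂ = p₁ + p₂ := by
    field_simp
  linarith [mul_log_le_mul_log_div_add_mul_sub hp₁ hr₁ h₁ ht,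
    mul_log_le_mul_log_div_add_mul_sub hp₂ hr₂ h₂ ht]

section NegInvariant

variable {G : Type*} [MeasurableSpace G] [AddGroup G] [MeasurableNeg G] {μ : Measure G}
  [μ.IsNegInvariant]

lemma ae_comp_neg_iff {P : G → Prop} : (∀ᵐ x ∂μ, P (-x)) ↔ ∀ᵐ x ∂μ, P x := by
  rw [← measurableEmbedding_neg.ae_map_iff, Measure.map_neg_eq_self]

lemma integrable_comp_neg_iff {f : G → ℝ} :
    Integrable (fun x => f (-x)) μ ↔ Integrable f μ :=
  ⟨fun h => by simpa only [neg_neg] using h.comp_neg, Integrable.comp_neg⟩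

end NegInvariant

lemma mOf_shift (f : ℝ → ℝ) (a : ℝ) : shiftMeasure a (mOf f) = mOf fun x => f (x - a) := by
  ext s hs
  rw [shiftMeasure, Measure.map_apply (measurable_add_const a) hs, mOf, mOf,
    withDensity_apply _ hs, withDensity_apply _ (measurable_add_const a hs),
    ← (measurePreserving_add_right volume a).setLIntegral_comp_preimage_emb
      (measurableEmbedding_addRight a) (fun x => ENNReal.ofReal (f (x - a)))]
  simp only [add_sub_cancel_right]

lemma mOf_half_add {p₁ p₂ : ℝ → ℝ} (hp₁ : Measurable p₁) (hp₂ : Measurable p₂)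
    (hp₁0 : ∀ x, 0 ≤ p₁ x) (hp₂0 : ∀ x, 0 ≤ p₂ x) :
    mOf (fun x => (p₁ x + p₂ x) / 2) = (2⁻¹ : ℝ≥0∞) • (mOf p₁ + mOf p₂) := by
  have hdens : (fun x => ENNReal.ofReal ((p₁ x + p₂ x) / 2))
      = (2⁻¹ : ℝ≥0∞) • ((fun x => ENNReal.ofReal (p₁ x)) + fun x => ENNReal.ofReal (p₂ x)) := by
    ext x
    rw [Pi.smul_apply, Pi.add_apply, smul_eq_mul, ENNReal.ofReal_div_of_pos two_pos,
      ENNReal.ofReal_add (hp₁0 x) (hp₂0 x), ENNReal.div_eq_inv_mul, ENNReal.ofReal_ofNat]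
  rw [mOf, hdens, withDensity_smul _ (hp₁.ennreal_ofReal.add hp₂.ennreal_ofReal),
    withDensity_add_left hp₁.ennreal_ofReal]
  rfl

lemma lintegral_ofReal_mOf (c : ℝ → ℝ) {f : ℝ → ℝ} (hf : Measurable f) (hf0 : ∀ x, 0 ≤ f x) :
    ∫⁻ x, ENNReal.ofReal (c x) ∂(mOf f) = ∫⁻ x, ENNReal.ofReal (c x * f x) := by
  rw [mOf, lintegral_withDensity_eq_lintegral_mul_non_measurable _ hf.ennreal_ofReal
    (ae_of_all _ fun _ => ENNReal.ofReal_lt_top)]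
  simp only [Pi.mul_apply, ← ENNReal.ofReal_mul (hf0 _), mul_comm]

lemma lintegral_ofReal_mul_symmetrize {c q : ℝ → ℝ} (hce : ∀ x, c (-x) = c x)
    (hq : Measurable q) (hq0 : ∀ x, 0 ≤ q x) :
    ∫⁻ x, ENNReal.ofReal (c x * ((q x + q (-x)) / 2)) = ∫⁻ x, ENNReal.ofReal (c x * q x) := by
  have hqn : Measurable fun x => q (-x) := hq.comp measurable_neg
  have hreflect : ∫⁻ x, ENNReal.ofReal (c x * q (-x)) = ∫⁻ x, ENNReal.ofReal (c x * q x) := by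
    simpa only [hce] using lintegral_neg_eq_self fun x => ENNReal.ofReal (c x * q x)
  rw [← lintegral_ofReal_mOf c (f := fun x => (q x + q (-x)) / 2) ((hq.add hqn).div_const 2)
      fun x => div_nonneg (add_nonneg (hq0 x) (hq0 (-x))) zero_le_two,
    mOf_half_add hq hqn hq0 fun x => hq0 _, lintegral_smul_measure, lintegral_add_measure,
    lintegral_ofReal_mOf c hq hq0, lintegral_ofReal_mOf c hqn fun x => hq0 _, hreflect,
    ← two_mul, smul_eq_mul, ← mul_assoc, ENNReal.inv_mul_cancel two_ne_zero ENNReal.ofNat_ne_top,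
    one_mul]

/-- Where `r x = 0` the first condition forces `p x = 0`, so the junk value `p x / 0 = 0` is
harmless. -/
def densityKL (p r : ℝ → ℝ) : ℝ≥0∞ :=
  if (∀ᵐ x, r x = 0 → p x = 0) ∧ Integrable fun x => p x * log (p x / r x) then
    ENNReal.ofReal (∫ x, p x * log (p x / r x))
  else ⊤

section mOf

instance (f : ℝ → ℝ) : SigmaFinite (mOf f) := SigmaFinite.withDensity_ofReal _

variable {p r : ℝ → ℝ}

lemma mOf_apply_eq_zero_iff (hp : Measurable p) (hp0 : ∀ x, 0 ≤ p x) {s : Set ℝ}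
    (hs : MeasurableSet s) : mOf p s = 0 ↔ ∀ᵐ x, x ∈ s → p x = 0 := by
  rw [mOf, withDensity_apply _ hs, setLIntegral_eq_zero_iff hs hp.ennreal_ofReal]
  simp only [ENNReal.ofReal_eq_zero, fun x => (hp0 x).ge_iff_eq']

lemma mOf_absolutelyContinuous_iff (hp : Measurable p) (hr : Measurable r)
    (hp0 : ∀ x, 0 ≤ p x) (hr0 : ∀ x, 0 ≤ r x) :
    mOf p ≪ mOf r ↔ ∀ᵐ x, r x = 0 → p x = 0 := by
  refine ⟨fun hac => ?_, fun hae => .mk fun s hs hrs => ?_⟩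
  · have hzero : MeasurableSet {x | r x = 0} := hr (measurableSet_singleton 0)
    exact (mOf_apply_eq_zero_iff hp hp0 hzero).1 <| hac <|
      (mOf_apply_eq_zero_iff hr hr0 hzero).2 (ae_of_all _ fun _ => id)
  · rw [mOf_apply_eq_zero_iff hr hr0 hs] at hrs
    rw [mOf_apply_eq_zero_iff hp hp0 hs]
    filter_upwards [hrs, hae] with x hrx hpx hxs using hpx (hrx hxs)

lemma mOf_eq_withDensity_div (hp : Measurable p) (hr : Measurable r) (hp0 : ∀ x, 0 ≤ p x)
    (hr0 : ∀ x, 0 ≤ r x) (hac : mOf p ≪ mOf r) :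
    mOf p = (mOf r).withDensity fun x => ENNReal.ofReal (p x / r x) := by
  have hpr : Measurable fun x => p x / r x := hp.div hr
  rw [mOf, mOf, ← withDensity_mul _ hr.ennreal_ofReal hpr.ennreal_ofReal]
  refine withDensity_congr_ae ?_
  filter_upwards [(mOf_absolutelyContinuous_iff hp hr hp0 hr0).1 hac] with x hpx
  rw [Pi.mul_apply, ← ENNReal.ofReal_mul (hr0 x)]
  rcases eq_or_ne (r x) 0 with hrx | hrx
  · simp [hrx, hpx hrx]
  · rw [mul_div_cancel₀ _ hrx]

lemma llr_mOf_ae_eq (hp : Measurable p) (hr : Measurable r) (hp0 : ∀ x, 0 ≤ p x)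
    (hr0 : ∀ x, 0 ≤ r x) (hac : mOf p ≪ mOf r) :
    llr (mOf p) (mOf r) =ᵐ[mOf p] fun x => log (p x / r x) := by
  refine hac.ae_eq ?_
  have hpr : Measurable fun x => p x / r x := hp.div hr
  have hrn := Measure.rnDeriv_withDensity (mOf r) hpr.ennreal_ofReal
  rw [← mOf_eq_withDensity_div hp hr hp0 hr0 hac] at hrn
  filter_upwards [hrn] with x hx
  rw [llr, hx, ENNReal.toReal_ofReal (div_nonneg (hp0 x) (hr0 x))]

lemma integral_mOf (hp : Measurable p) (hp0 : ∀ x, 0 ≤ p x) (F : ℝ → ℝ) :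
    ∫ x, F x ∂(mOf p) = ∫ x, p x * F x := by
  rw [mOf, integral_withDensity_eq_integral_toReal_smul hp.ennreal_ofReal
    (ae_of_all _ fun _ => ENNReal.ofReal_lt_top)]
  simp only [ENNReal.toReal_ofReal (hp0 _), smul_eq_mul]

lemma integrable_mOf_iff (hp : Measurable p) (hp0 : ∀ x, 0 ≤ p x) {F : ℝ → ℝ} :
    Integrable F (mOf p) ↔ Integrable fun x => p x * F x := by
  rw [mOf, integrable_withDensity_iff_integrable_smul' hp.ennreal_ofReal
    (ae_of_all _ fun _ => ENNReal.ofReal_lt_top)]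
  simp only [ENNReal.toReal_ofReal (hp0 _), smul_eq_mul]

lemma KLdiv_mOf (hp : Measurable p) (hr : Measurable r) (hp0 : ∀ x, 0 ≤ p x)
    (hr0 : ∀ x, 0 ≤ r x) : KLdiv (mOf p) (mOf r) = densityKL p r := by
  rw [KLdiv, densityKL, ← mOf_absolutelyContinuous_iff hp hr hp0 hr0]
  by_cases hac : mOf p ≪ mOf r
  · have hllr := llr_mOf_ae_eq hp hr hp0 hr0 hac
    simp only [hac, true_and, integrable_congr hllr, integrable_mOf_iff hp hp0,
      integral_congr_ae hllr, integral_mOf hp hp0]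
  · simp only [hac, false_and, if_false]

end mOf

lemma densityKL_comp_neg (p r : ℝ → ℝ) :
    densityKL (fun x => p (-x)) (fun x => r (-x)) = densityKL p r := by
  simp only [densityKL, ae_comp_neg_iff (P := fun x => r x = 0 → p x = 0),
    integrable_comp_neg_iff (f := fun x => p x * log (p x / r x)),
    integral_neg_eq_self (fun x => p x * log (p x / r x))]

section HalfAdd

variable {p₁ p₂ r₁ r₂ : ℝ → ℝ}

lemma ae_half_add_eq_zero_imp (hr₁0 : ∀ x, 0 ≤ r₁ x) (hr₂0 : ∀ x, 0 ≤ r₂ x)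
    (hz₁ : ∀ᵐ x, r₁ x = 0 → p₁ x = 0) (hz₂ : ∀ᵐ x, r₂ x = 0 → p₂ x = 0) :
    ∀ᵐ x, (r₁ x + r₂ x) / 2 = 0 → (p₁ x + p₂ x) / 2 = 0 := by
  filter_upwards [hz₁, hz₂] with x hx₁ hx₂ hx
  obtain ⟨e₁, e₂⟩ := (add_eq_zero_iff_of_nonneg (hr₁0 x) (hr₂0 x)).1 (by linarith)
  rw [hx₁ e₁, hx₂ e₂, add_zero, zero_div]

lemma ae_half_add_mul_log_div_le (hp₁0 : ∀ x, 0 ≤ p₁ x) (hp₂0 : ∀ x, 0 ≤ p₂ x)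
    (hr₁0 : ∀ x, 0 ≤ r₁ x) (hr₂0 : ∀ x, 0 ≤ r₂ x)
    (hz₁ : ∀ᵐ x, r₁ x = 0 → p₁ x = 0) (hz₂ : ∀ᵐ x, r₂ x = 0 → p₂ x = 0) :
    ∀ᵐ x, (p₁ x + p₂ x) / 2 * log ((p₁ x + p₂ x) / 2 / ((r₁ x + r₂ x) / 2))
      ≤ (p₁ x * log (p₁ x / r₁ x) + p₂ x * log (p₂ x / r₂ x)) / 2 := by
  filter_upwards [hz₁, hz₂] with x hx₁ hx₂
  have := add_mul_log_div_add_le (hp₁0 x) (hp₂0 x) (hr₁0 x) (hr₂0 x) hx₁ hx₂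
  rw [div_div_div_cancel_right₀ (two_ne_zero' ℝ)]
  linarith

lemma integrable_half_add_mul_log_div (hp₁ : Measurable p₁) (hp₂ : Measurable p₂)
    (hr₁ : Measurable r₁) (hr₂ : Measurable r₂) (hp₁0 : ∀ x, 0 ≤ p₁ x) (hp₂0 : ∀ x, 0 ≤ p₂ x)
    (hr₁0 : ∀ x, 0 ≤ r₁ x) (hr₂0 : ∀ x, 0 ≤ r₂ x) (hr₁i : Integrable r₁) (hr₂i : Integrable r₂)
    (hz₁ : ∀ᵐ x, r₁ x = 0 → p₁ x = 0) (hz₂ : ∀ᵐ x, r₂ x = 0 → p₂ x = 0)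
    (hi₁ : Integrable fun x => p₁ x * log (p₁ x / r₁ x))
    (hi₂ : Integrable fun x => p₂ x * log (p₂ x / r₂ x)) :
    Integrable fun x => (p₁ x + p₂ x) / 2 * log ((p₁ x + p₂ x) / 2 / ((r₁ x + r₂ x) / 2)) := by
  have hlower : ∀ᵐ x, -((r₁ x + r₂ x) / 2)
      ≤ (p₁ x + p₂ x) / 2 * log ((p₁ x + p₂ x) / 2 / ((r₁ x + r₂ x) / 2)) := by
    filter_upwards [ae_half_add_eq_zero_imp hr₁0 hr₂0 hz₁ hz₂] with x hx
    have hp : 0 ≤ (p₁ x + p₂ x) / 2 := by linarith [hp₁0 x, hp₂0 x]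
    have hr : 0 ≤ (r₁ x + r₂ x) / 2 := by linarith [hr₁0 x, hr₂0 x]
    linarith [sub_le_mul_log_div hp hr hx]
  exact integrable_of_le_of_le (by fun_prop) hlower
    (ae_half_add_mul_log_div_le hp₁0 hp₂0 hr₁0 hr₂0 hz₁ hz₂)
    ((hr₁i.add hr₂i).div_const 2).neg ((hi₁.add hi₂).div_const 2)

lemma densityKL_half_add_le (hp₁ : Measurable p₁) (hp₂ : Measurable p₂)
    (hr₁ : Measurable r₁) (hr₂ : Measurable r₂) (hp₁0 : ∀ x, 0 ≤ p₁ x) (hp₂0 : ∀ x, 0 ≤ p₂ x)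
    (hr₁0 : ∀ x, 0 ≤ r₁ x) (hr₂0 : ∀ x, 0 ≤ r₂ x) (hr₁i : Integrable r₁) (hr₂i : Integrable r₂) :
    densityKL (fun x => (p₁ x + p₂ x) / 2) (fun x => (r₁ x + r₂ x) / 2)
      ≤ (densityKL p₁ r₁ + densityKL p₂ r₂) / 2 := by
  by_cases h₁ : (∀ᵐ x, r₁ x = 0 → p₁ x = 0) ∧ Integrable fun x => p₁ x * log (p₁ x / r₁ x)
  swap
  · simp [densityKL, h₁, ENNReal.top_div_of_ne_top]
  by_cases h₂ : (∀ᵐ x, r₂ x = 0 → p₂ x = 0) ∧ Integrable fun x => p₂ x * log (p₂ x / r₂ x)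
  swap
  · simp [densityKL, h₂, ENNReal.top_div_of_ne_top]
  obtain ⟨hz₁, hi₁⟩ := h₁
  obtain ⟨hz₂, hi₂⟩ := h₂
  have hi := integrable_half_add_mul_log_div hp₁ hp₂ hr₁ hr₂ hp₁0 hp₂0 hr₁0 hr₂0 hr₁i hr₂i
    hz₁ hz₂ hi₁ hi₂
  rw [densityKL, if_pos ⟨ae_half_add_eq_zero_imp hr₁0 hr₂0 hz₁ hz₂, hi⟩, densityKL,
    if_pos ⟨hz₁, hi₁⟩, densityKL, if_pos ⟨hz₂, hi₂⟩]
  calc ENNReal.ofReal (∫ x, (p₁ x + p₂ x) / 2 * log ((p₁ x + p₂ x) / 2 / ((r₁ x + r₂ x) / 2)))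
      ≤ ENNReal.ofReal (((∫ x, p₁ x * log (p₁ x / r₁ x)) + ∫ x, p₂ x * log (p₂ x / r₂ x)) / 2) := by
        refine ENNReal.ofReal_le_ofReal ?_
        rw [← integral_add hi₁ hi₂, ← integral_div]
        exact integral_mono_ae hi ((hi₁.add hi₂).div_const 2)
          (ae_half_add_mul_log_div_le hp₁0 hp₂0 hr₁0 hr₂0 hz₁ hz₂)
    _ ≤ _ := by
        rw [ENNReal.ofReal_div_of_pos two_pos, ENNReal.ofReal_ofNat]
        gcongr
        exact ENNReal.ofReal_add_le

end HalfAdd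

lemma KLdiv_symmetrize_shift_le {q : ℝ → ℝ} (hqm : Measurable q) (hq0 : ∀ x, 0 ≤ q x)
    (hqi : Integrable q) (a : ℝ) :
    KLdiv (mOf fun x => (q x + q (-x)) / 2) (shiftMeasure a (mOf fun x => (q x + q (-x)) / 2))
      ≤ (KLdiv (mOf q) (shiftMeasure a (mOf q)) +
          KLdiv (mOf q) (shiftMeasure (-a) (mOf q))) / 2 := by
  have hq0' (f : ℝ → ℝ) (x : ℝ) : 0 ≤ q (f x) := hq0 _
  have hKL (b : ℝ) : KLdiv (mOf q) (shiftMeasure b (mOf q)) = densityKL q fun x => q (x - b) := by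
    rw [mOf_shift, KLdiv_mOf hqm (by fun_prop) hq0 (hq0' _)]
  have hreflect :
      densityKL (fun x => q (-x)) (fun x => q (a - x)) = densityKL q fun x => q (x - -a) := by
    simpa only [sub_neg_eq_add, neg_add_eq_sub] using densityKL_comp_neg q fun x => q (x + a)
  calc KLdiv (mOf fun x => (q x + q (-x)) / 2) (shiftMeasure a (mOf fun x => (q x + q (-x)) / 2))
      = densityKL (fun x => (q x + q (-x)) / 2) (fun x => (q (x - a) + q (a - x)) / 2) := by
        rw [mOf_shift]
        simp only [neg_sub]
        exact KLdiv_mOf (by fun_prop) (by fun_prop) (fun x => by linarith [hq0 x, hq0 (-x)])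
          (fun x => by linarith [hq0 (x - a), hq0 (a - x)])
    _ ≤ (densityKL q (fun x => q (x - a)) + densityKL (fun x => q (-x)) fun x => q (a - x)) / 2 :=
        densityKL_half_add_le hqm (by fun_prop) (by fun_prop) (by fun_prop) hq0 (hq0' _)
          (hq0' _) (hq0' _) (hqi.comp_sub_right a) (hqi.comp_sub_left a)
    _ = _ := by rw [hreflect, hKL, hKL]

theorem symmetrization_improves_general (c : ℝ → ℝ) (hce : ∀ x, c (-x) = c x)
    (q : ℝ → ℝ) (hqm : Measurable q) (hq0 : ∀ x, 0 ≤ q x) (hq1 : ∫ x, q x = 1)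
    (s : ℝ) :
    (∫⁻ x, ENNReal.ofReal (c x * ((q x + q (-x)) / 2))) = (∫⁻ x, ENNReal.ofReal (c x * q x)) ∧
    (⨆ (a : ℝ) (_ : |a| ≤ s),
        KLdiv (mOf fun x => (q x + q (-x)) / 2)
          (shiftMeasure a (mOf fun x => (q x + q (-x)) / 2))) ≤
      ⨆ (a : ℝ) (_ : |a| ≤ s), KLdiv (mOf q) (shiftMeasure a (mOf q)) := by
  refine ⟨lintegral_ofReal_mul_symmetrize hce hqm hq0, iSup₂_le fun a ha => ?_⟩
  set K := ⨆ (a : ℝ) (_ : |a| ≤ s), KLdiv (mOf q) (shiftMeasure a (mOf q))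
  have hK (b : ℝ) (hb : |b| ≤ s) : KLdiv (mOf q) (shiftMeasure b (mOf q)) ≤ K :=
    le_iSup₂ (f := fun b (_ : |b| ≤ s) => KLdiv (mOf q) (shiftMeasure b (mOf q))) b hb
  have hqi : Integrable q := .of_integral_ne_zero (by rw [hq1]; exact one_ne_zero)
  refine (KLdiv_symmetrize_shift_le hqm hq0 hqi a).trans <| ENNReal.div_le_of_le_mul ?_
  calc _ ≤ K + K := add_le_add (hK a ha) (hK (-a) (by rwa [abs_neg]))
    _ = K * 2 := (mul_two K).symm

/-- Symmetrization does not change the cost and does not increase the maximal KL-divergence. -/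
theorem symmetrization_improves (c : ℝ → ℝ) (hc0 : ∀ x, 0 ≤ c x) (hce : ∀ x, c (-x) = c x)
    (q : ℝ → ℝ) (hqm : Measurable q) (hq0 : ∀ x, 0 ≤ q x) (hq1 : ∫ x, q x = 1)
    (s : ℝ) (hs : 0 < s) :
    (∫⁻ x, ENNReal.ofReal (c x * ((q x + q (-x)) / 2))) = (∫⁻ x, ENNReal.ofReal (c x * q x)) ∧
    (⨆ (a : ℝ) (_ : |a| ≤ s),
        KLdiv (mOf fun x => (q x + q (-x)) / 2)
          (shiftMeasure a (mOf fun x => (q x + q (-x)) / 2))) ≤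
      ⨆ (a : ℝ) (_ : |a| ≤ s), KLdiv (mOf q) (shiftMeasure a (mOf q)) :=
  symmetrization_improves_general c hce q hqm hq0 hq1 s

end
end
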